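/- arXiv:2206.02068 — 9 statements merged into one kernel-verified Lean document; each statement's English description precedes it below -/
import Mathlib

section
/- Let X be a countable set, let p and q be probability measures on the power set of X with p strictly coherent, and let E = {E_i} be a countable partition of X. Then q comes from p by Jeffrey conditioning on E (i.e., q(A) = ∑_i q(E_i)·p(A | E_i) for all A ⊆ X) if and only if for each index i and all x, x' ∈ E_i one has q({x})/p({x}) = q({x'})/p({x'}). -/
/-!
Applying the Jeffrey formula to a singleton `{y} ⊆ Eᵢ` kills every term but the `i`-th, so
`q{y}/p{y} = q(Eᵢ)/p(Eᵢ)` throughout `Eᵢ`. Conversely, if `q{x} = c · p{x}` on `Eᵢ`, then, since a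
measure on a countable set is determined by its singletons, `q = c · p` on subsets of `Eᵢ`; hence
`q(A ∩ Eᵢ) = q(Eᵢ) · p(A ∩ Eᵢ)/p(Eᵢ)`, and summing over the partition gives the Jeffrey formula.
-/

open MeasureTheory
open scoped ENNReal

section

variable {X ι : Type*} [MeasurableSpace X] {p q : Measure X}

theorem measure_eq_mul_of_forall_singleton_eq_mul [MeasurableSingletonClass X] [Countable X]
    {s t : Set X} {c : ℝ≥0∞} (h : ∀ x ∈ s, q {x} = c * p {x}) (hts : t ⊆ s) :
    q t = c * p t := by
  have hrestrict : q.restrict s = c • p.restrict s := by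
    refine Measure.ext_of_singleton fun a => ?_
    by_cases ha : a ∈ s
    · simp [Set.singleton_inter_of_mem ha, h a ha]
    · simp [Set.singleton_inter_of_notMem ha]
  rw [← Measure.restrict_eq_self q hts, hrestrict, Measure.smul_apply,
    Measure.restrict_eq_self p hts, smul_eq_mul]

theorem measure_eq_mul_div_of_singleton_ratio_const [MeasurableSingletonClass X] [Countable X]
    [IsFiniteMeasure p] {s t : Set X} (hp₀ : ∀ x ∈ s, p {x} ≠ 0)
    (hconst : ∀ x ∈ s, ∀ x' ∈ s, q {x} / p {x} = q {x'} / p {x'}) (hts : t ⊆ s) :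
    q t = q s * (p t / p s) := by
  rcases s.eq_empty_or_nonempty with rfl | ⟨x₀, hx₀⟩
  · simp [Set.subset_empty_iff.1 hts]
  have hmul : ∀ u ⊆ s, q u = q {x₀} / p {x₀} * p u := by
    refine fun u hu => measure_eq_mul_of_forall_singleton_eq_mul (fun x hx => ?_) hu
    rw [← hconst x hx x₀ hx₀, ENNReal.div_mul_cancel (hp₀ x hx) (measure_ne_top p _)]
  have hps : p s ≠ 0 :=
    ne_bot_of_le_ne_bot (hp₀ x₀ hx₀) (measure_mono (Set.singleton_subset_iff.2 hx₀))
  rw [hmul t hts, hmul s subset_rfl, mul_assoc, ENNReal.mul_div_cancel hps (measure_ne_top p s)]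

theorem measure_eq_tsum_measure_inter [Countable ι] {E : ι → Set X}
    (hE : ∀ i, MeasurableSet (E i)) (hdisj : Pairwise (Function.onFun Disjoint E))
    (hcover : ⋃ i, E i = Set.univ) {A : Set X} (hA : MeasurableSet A) :
    q A = ∑' i, q (A ∩ E i) := by
  have hdisjA : Pairwise (Function.onFun Disjoint fun i => A ∩ E i) := fun i j hij =>
    (hdisj hij).mono Set.inter_subset_right Set.inter_subset_right
  rw [← measure_iUnion hdisjA fun i => hA.inter (hE i), ← Set.inter_iUnion, hcover,
    Set.inter_univ]

theorem measure_singleton_eq_of_jeffrey {E : ι → Set X}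
    (hdisj : Pairwise (Function.onFun Disjoint E))
    (hJ : ∀ A, q A = ∑' i, q (E i) * (p (A ∩ E i) / p (E i))) {i : ι} {y : X} (hy : y ∈ E i) :
    q {y} = q (E i) * (p {y} / p (E i)) := by
  rw [hJ {y}, tsum_eq_single i fun j hj => ?_, Set.singleton_inter_of_mem hy]
  rw [Set.singleton_inter_of_notMem fun hyj => Set.disjoint_left.1 (hdisj hj) hyj hy]
  simp

theorem measure_singleton_div_eq_of_jeffrey {E : ι → Set X}
    (hdisj : Pairwise (Function.onFun Disjoint E))
    (hJ : ∀ A, q A = ∑' i, q (E i) * (p (A ∩ E i) / p (E i))) {i : ι} {y : X} (hy : y ∈ E i)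
    (hp₀ : p {y} ≠ 0) (hp : p {y} ≠ ∞) :
    q {y} / p {y} = q (E i) / p (E i) := by
  rw [measure_singleton_eq_of_jeffrey hdisj hJ hy, ← ENNReal.mul_comm_div,
    ENNReal.mul_div_cancel_right hp₀ hp]

end

theorem jeffrey_iff_ratio_constant_on_blocks_general {X : Type*} [Countable X]
    (p q : @Measure X ⊤)
    (hp : @IsProbabilityMeasure X ⊤ p)
    (hcoh : ∀ A : Set X, A.Nonempty → 0 < p A)
    {ι : Type*} [Countable ι] (E : ι → Set X)
    (hdisj : Pairwise (Function.onFun Disjoint E))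
    (hcover : (⋃ i, E i) = Set.univ) :
    (∀ A : Set X, q A = ∑' i, q (E i) * (p (A ∩ E i) / p (E i))) ↔
      (∀ i, ∀ x ∈ E i, ∀ x' ∈ E i, q {x} / p {x} = q {x'} / p {x'}) := by
  let : MeasurableSpace X := ⊤
  have hp₀ (x : X) : p {x} ≠ 0 := (hcoh {x} (Set.singleton_nonempty x)).ne'
  constructor
  · intro hJ i x hx x' hx'
    rw [measure_singleton_div_eq_of_jeffrey hdisj hJ hx (hp₀ x) (measure_ne_top p _),
      measure_singleton_div_eq_of_jeffrey hdisj hJ hx' (hp₀ x') (measure_ne_top p _)]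
  · intro hconst A
    rw [measure_eq_tsum_measure_inter (fun _ => .of_discrete) hdisj hcover .of_discrete]
    exact tsum_congr fun i => measure_eq_mul_div_of_singleton_ratio_const (fun x _ => hp₀ x)
      (hconst i) Set.inter_subset_right

/-- For probability measures `p, q` on the power set of a countable set `X`
with `p` strictly coherent, and a countable partition `E` of `X`, `q` comes from `p` by
Jeffrey conditioning on `E` iff for each block `Eᵢ` and all `x, x' ∈ Eᵢ` one has
`q({x})/p({x}) = q({x'})/p({x'})`. -/
theorem jeffrey_iff_ratio_constant_on_blocks {X : Type*} [Countable X]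
    (p q : @Measure X ⊤)
    (hp : @IsProbabilityMeasure X ⊤ p)
    (hq : @IsProbabilityMeasure X ⊤ q)
    (hcoh : ∀ A : Set X, A.Nonempty → 0 < p A)
    {ι : Type*} [Countable ι] (E : ι → Set X)
    (hdisj : Pairwise (Function.onFun Disjoint E))
    (hcover : (⋃ i, E i) = Set.univ)
    (hne : ∀ i, (E i).Nonempty) :
    (∀ A : Set X, q A = ∑' i, q (E i) * (p (A ∩ E i) / p (E i))) ↔
      (∀ i, ∀ x ∈ E i, ∀ x' ∈ E i, q {x} / p {x} = q {x'} / p {x'}) :=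
  jeffrey_iff_ratio_constant_on_blocks_general p q hp hcoh E hdisj hcover
end

section
/- Let X be a countable set, and let p and q be probability measures on the power set of X with p strictly coherent. Then q comes from p by Jeffrey conditioning on some nontrivial countable partition of X if and only if there exist distinct elements x and x' of X such that q({x})/p({x}) = q({x'})/p({x'}). -/
/-!
If `q` is a Jeffrey update of `p` on a partition, then on each block `E` the measure `q` is the
multiple `q E / p E` of `p`, so the likelihood ratio `q {x} / p {x}` is constant on blocks and any
two points of a nontrivial block collide. Conversely, whenever the likelihood ratio factors through
a map `g`, restricted to each fibre of `g` the measure `q` is a multiple of `p`, which is exactly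
Jeffrey conditioning on the fibres; a collision `x ≠ x'` gives the map gluing `x'` onto `x`, whose
fibres are `{x, x'}` and singletons.
-/

open MeasureTheory ENNReal Set Function

section FiberPartition

variable {X Y : Type*}

def fiberPartition (g : X → Y) (y : range g) : Set X := g ⁻¹' {y.1}

theorem pairwise_disjoint_fiberPartition (g : X → Y) : Pairwise (Disjoint on fiberPartition g) :=
  fun _ _ hne => pairwise_disjoint_fiber g (Subtype.coe_injective.ne hne)

theorem iUnion_fiberPartition (g : X → Y) : ⋃ y, fiberPartition g y = univ :=
  iUnion_eq_univ_iff.2 fun z => ⟨⟨g z, z, rfl⟩, rfl⟩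

theorem fiberPartition_nonempty (g : X → Y) (y : range g) : (fiberPartition g y).Nonempty :=
  y.2

theorem mem_fiberPartition {g : X → Y} {y : range g} {z : X} :
    z ∈ fiberPartition g y ↔ g z = y :=
  Iff.rfl

end FiberPartition

section Jeffrey

variable {X ι : Type*} [MeasurableSpace X]

def IsJeffreyUpdate (p q : Measure X) (E : ι → Set X) : Prop :=
  ∀ A, q A = ∑' i, q (E i) * (p (A ∩ E i) / p (E i))

variable {p q : Measure X} {E : ι → Set X}

theorem IsJeffreyUpdate.apply_singleton (h : IsJeffreyUpdate p q E)
    (hE : Pairwise (Disjoint on E)) {i : ι} {z : X} (hz : z ∈ E i) :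
    q {z} = q (E i) * (p {z} / p (E i)) := by
  rw [h {z}, tsum_eq_single i fun j hj => ?_]
  · rw [singleton_inter_of_mem hz]
  · simp [singleton_inter_eq_empty.2 ((hE hj).notMem_of_mem_right hz)]

theorem IsJeffreyUpdate.div_singleton_eq [IsFiniteMeasure p] (h : IsJeffreyUpdate p q E)
    (hE : Pairwise (Disjoint on E)) {i : ι} {z : X} (hz : z ∈ E i) (hpz : p {z} ≠ 0) :
    q {z} / p {z} = q (E i) / p (E i) := by
  rw [h.apply_singleton hE hz, ← mul_div_assoc, ENNReal.mul_div_right_comm,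
    ENNReal.mul_div_cancel_right hpz (measure_ne_top p _)]

variable [DiscreteMeasurableSpace X]

theorem isJeffreyUpdate_of_restrict_eq_smul [IsFiniteMeasure p] [Countable ι]
    (hE : Pairwise (Disjoint on E)) (hcover : ⋃ i, E i = univ) (hpE : ∀ i, p (E i) ≠ 0)
    (c : ι → ℝ≥0∞) (hc : ∀ i, q.restrict (E i) = c i • p.restrict (E i)) :
    IsJeffreyUpdate p q E := by
  have hblock : ∀ i A, q (A ∩ E i) = c i * p (A ∩ E i) := fun i A => by
    simpa [Measure.restrict_apply' (DiscreteMeasurableSpace.forall_measurableSet (E i))]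
      using congrArg (· A) (hc i)
  have hqE : ∀ i, q (E i) = c i * p (E i) := fun i => by simpa using hblock i univ
  intro A
  calc q A = q (⋃ i, A ∩ E i) := by rw [← inter_iUnion, hcover, inter_univ]
    _ = ∑' i, q (A ∩ E i) :=
        measure_iUnion (fun i j hij => (hE hij).mono inf_le_right inf_le_right)
          fun _ => DiscreteMeasurableSpace.forall_measurableSet _
    _ = ∑' i, q (E i) * (p (A ∩ E i) / p (E i)) := by
        refine tsum_congr fun i => ?_
        rw [hblock, hqE, mul_assoc, ENNReal.mul_div_cancel (hpE i) (measure_ne_top p _)]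

theorem restrict_eq_smul_of_forall_div_singleton_eq [Countable X] [IsFiniteMeasure p]
    {s : Set X} {c : ℝ≥0∞} (hp : ∀ z ∈ s, p {z} ≠ 0) (hc : ∀ z ∈ s, q {z} / p {z} = c) :
    q.restrict s = c • p.restrict s := by
  refine Measure.ext_of_singleton fun z => ?_
  simp only [Measure.smul_apply, smul_eq_mul,
    Measure.restrict_apply' (DiscreteMeasurableSpace.forall_measurableSet s)]
  by_cases hz : z ∈ s
  · rw [singleton_inter_of_mem hz, ← hc z hz,
      ENNReal.div_mul_cancel (hp z hz) (measure_ne_top p _)]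
  · simp [singleton_inter_eq_empty.2 hz]

theorem isJeffreyUpdate_fiberPartition [Countable X] [IsFiniteMeasure p] {Y : Type*} (g : X → Y)
    (hp : ∀ z, p {z} ≠ 0) (c : Y → ℝ≥0∞) (hc : ∀ z, q {z} / p {z} = c (g z)) :
    IsJeffreyUpdate p q (fiberPartition g) := by
  have : Countable (range g) := (countable_range g).to_subtype
  have hpE (y : range g) : p (fiberPartition g y) ≠ 0 := by
    obtain ⟨z, hz⟩ := fiberPartition_nonempty g y
    exact ((hp z).bot_lt.trans_le (measure_mono (singleton_subset_iff.2 hz))).ne'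
  refine isJeffreyUpdate_of_restrict_eq_smul (pairwise_disjoint_fiberPartition g)
    (iUnion_fiberPartition g) hpE (fun y => c y) fun y =>
      restrict_eq_smul_of_forall_div_singleton_eq (fun z _ => hp z) fun z hz => ?_
  rw [hc, mem_fiberPartition.1 hz]

end Jeffrey

theorem jeffrey_nontrivial_iff_ratio_collision_general {X : Type} [Countable X]
    (p q : @Measure X ⊤)
    (hp : @IsProbabilityMeasure X ⊤ p)
    (hcoh : ∀ A : Set X, A.Nonempty → 0 < p A) :
    (∃ (ι : Type) (_ : Countable ι) (E : ι → Set X),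
        Pairwise (Function.onFun Disjoint E) ∧
        (⋃ i, E i) = Set.univ ∧
        (∀ i, (E i).Nonempty) ∧
        (∃ i, ∃ x ∈ E i, ∃ y ∈ E i, x ≠ y) ∧
        (∀ A : Set X, q A = ∑' i, q (E i) * (p (A ∩ E i) / p (E i)))) ↔
      (∃ x x' : X, x ≠ x' ∧ q {x} / p {x} = q {x'} / p {x'}) := by
  classical
  let _ : MeasurableSpace X := ⊤
  have hpz : ∀ z, p {z} ≠ 0 := fun z => (hcoh _ (singleton_nonempty z)).ne'
  constructor
  · rintro ⟨ι, -, E, hE, -, -, ⟨i, x, hx, y, hy, hxy⟩, (hJ : IsJeffreyUpdate p q E)⟩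
    exact ⟨x, y, hxy, (hJ.div_singleton_eq hE hx (hpz x)).trans
      (hJ.div_singleton_eq hE hy (hpz y)).symm⟩
  · rintro ⟨x, x', hne, hratio⟩
    let g : X → X := fun z => if z = x' then x else z
    have hgx : g x = x := if_neg hne
    have hgx' : g x' = x := if_pos rfl
    refine ⟨range g, (countable_range g).to_subtype, fiberPartition g,
      pairwise_disjoint_fiberPartition g, iUnion_fiberPartition g, fiberPartition_nonempty g,
      ⟨⟨x, x, hgx⟩, x, hgx, x', hgx', hne⟩,
      isJeffreyUpdate_fiberPartition g hpz (fun y => q {y} / p {y}) fun z => ?_⟩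
    by_cases hz : z = x'
    · rw [hz, hgx', hratio]
    · rw [show g z = z from if_neg hz]

/-- For probability measures `p, q` on the power set of a countable set `X`
with `p` strictly coherent, `q` comes from `p` by Jeffrey conditioning on some nontrivial
countable partition of `X` iff there exist distinct `x, x' ∈ X` with
`q({x})/p({x}) = q({x'})/p({x'})`. -/
theorem jeffrey_nontrivial_iff_ratio_collision {X : Type} [Countable X]
    (p q : @Measure X ⊤)
    (hp : @IsProbabilityMeasure X ⊤ p)
    (hq : @IsProbabilityMeasure X ⊤ q)
    (hcoh : ∀ A : Set X, A.Nonempty → 0 < p A) :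
    (∃ (ι : Type) (_ : Countable ι) (E : ι → Set X),
        Pairwise (Function.onFun Disjoint E) ∧
        (⋃ i, E i) = Set.univ ∧
        (∀ i, (E i).Nonempty) ∧
        (∃ i, ∃ x ∈ E i, ∃ y ∈ E i, x ≠ y) ∧
        (∀ A : Set X, q A = ∑' i, q (E i) * (p (A ∩ E i) / p (E i)))) ↔
      (∃ x x' : X, x ≠ x' ∧ q {x} / p {x} = q {x'} / p {x'}) :=
  jeffrey_nontrivial_iff_ratio_collision_general p q hp hcoh
end

section
/- Let X be a countable set with at least two elements, and let P be a nonempty countable family of probability distributions on X, each of which assigns positive probability to every point of X. Then the set of probability distributions q on X such that, for every p ∈ P, the ratios q(x)/p(x) (x ∈ X) are pairwise distinct, has cardinality equal to the cardinality of the continuum. -/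
/-!
Fix an injection `e : X → ℕ` and, for `0 < t < 1`, the geometric distribution
`q_t x = t ^ e x / ∑' y, t ^ e y`. For fixed `p` and `x ≠ y`, the tie `q_t x / p x = q_t y / p y`
says `t ^ e x / p x = t ^ e y / p y`, which has at most one positive root because `e x ≠ e y`.
So only countably many `t` produce a tie for some `p ∈ P`, and the remaining continuum of
parameters gives pairwise distinct distributions `q_t` in the blind spot. The upper bound is
`#(X → ℝ) ≤ 𝔠 ^ ℵ₀ = 𝔠`.
-/

open Cardinal Set Function

theorem Cardinal.mk_diff_eq_of_countable {α : Type*} {s t : Set α} (ht : t.Countable)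
    (hs : ℵ₀ < #s) : #(s \ t : Set α) = #s := by
  have hst : #(s ∩ t : Set α) < #s := (ht.mono inter_subset_right).le_aleph0.trans_lt hs
  refine eq_of_add_eq_of_aleph0_le ?_ hst hs.le
  rw [add_comm, ← sdiff_self_inter]
  exact mk_sdiff_add_mk inter_subset_left

theorem Cardinal.mk_fun_real_le_continuum (X : Type) [Countable X] : #(X → ℝ) ≤ 𝔠 := by
  rw [← power_def, mk_real]
  exact (power_le_power_left continuum_ne_zero mk_le_aleph0).trans_eq continuum_power_aleph0

theorem subsingleton_pos_pow_div_eq {K : Type*} [Field K] [LinearOrder K] [IsStrictOrderedRing K]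
    {k m : ℕ} (hkm : k ≠ m) {c d : K} (hc : c ≠ 0) (hd : d ≠ 0) :
    {t : K | 0 < t ∧ t ^ k / c = t ^ m / d}.Subsingleton := by
  wlog hlt : m < k generalizing k m c d
  · simpa only [eq_comm (a := _ / c)] using this hkm.symm hd hc (hkm.lt_or_gt.resolve_right hlt)
  obtain ⟨n, rfl⟩ := Nat.exists_eq_add_of_lt hlt
  have reduce : ∀ t : K, 0 < t → t ^ (m + n + 1) / c = t ^ m / d → t ^ (n + 1) = c / d := by
    intro t ht h
    rw [add_assoc, pow_add, div_eq_div_iff hc hd] at h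
    field_simp
    exact mul_left_cancel₀ (pow_ne_zero m ht.ne') (by linear_combination h)
  rintro t ⟨ht, htk⟩ s ⟨hs, hsk⟩
  exact (pow_left_inj₀ ht.le hs.le n.succ_ne_zero).mp
    ((reduce t ht htk).trans (reduce s hs hsk).symm)

section GeometricDistribution

variable {X : Type*} {e : X → ℕ} {t : ℝ}

noncomputable def geometricDistribution (e : X → ℕ) (t : ℝ) (x : X) : ℝ :=
  t ^ e x / ∑' y, t ^ e y

theorem summable_pow_comp (he : Injective e) (ht0 : 0 ≤ t) (ht1 : t < 1) :
    Summable fun x => t ^ e x :=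
  (summable_geometric_of_lt_one ht0 ht1).comp_injective he

theorem tsum_pow_comp_pos [Nonempty X] (he : Injective e) (ht0 : 0 < t) (ht1 : t < 1) :
    0 < ∑' x, t ^ e x :=
  (summable_pow_comp he ht0.le ht1).tsum_pos (fun _ => by positivity) (Classical.arbitrary X)
    (pow_pos ht0 _)

theorem geometricDistribution_nonneg (ht : 0 ≤ t) (x : X) : 0 ≤ geometricDistribution e t x :=
  div_nonneg (pow_nonneg ht _) (tsum_nonneg fun _ => pow_nonneg ht _)

theorem hasSum_geometricDistribution [Nonempty X] (he : Injective e) (ht0 : 0 < t) (ht1 : t < 1) :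
    HasSum (geometricDistribution e t) 1 := by
  rw [← div_self (tsum_pow_comp_pos he ht0 ht1).ne']
  exact (summable_pow_comp he ht0.le ht1).hasSum.div_const _

theorem injective_geometricDistribution_div_iff [Nonempty X] (he : Injective e) (ht0 : 0 < t)
    (ht1 : t < 1) (p : X → ℝ) :
    Injective (fun x => geometricDistribution e t x / p x) ↔ Injective fun x => t ^ e x / p x := by
  simp only [Injective, geometricDistribution, div_right_comm _ (∑' y, t ^ e y),
    div_left_inj' (tsum_pow_comp_pos he ht0 ht1).ne']

theorem injOn_geometricDistribution [Nontrivial X] (he : Injective e) :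
    InjOn (geometricDistribution e) (Ioo 0 1) := by
  rintro t ⟨ht0, ht1⟩ s ⟨hs0, -⟩ hts
  obtain ⟨a, b, hab⟩ := exists_pair_ne X
  have ratio : ∀ x, t ^ e x / s ^ e x = (∑' y, t ^ e y) / ∑' y, s ^ e y := fun x =>
    (div_eq_div_iff_div_eq_div' (tsum_pow_comp_pos he ht0 ht1).ne' (pow_pos hs0 _).ne').mp
      (congrFun hts x)
  refine subsingleton_pos_pow_div_eq (he.ne hab) (pow_ne_zero (e a) hs0.ne')
    (pow_ne_zero (e b) hs0.ne') ⟨ht0, (ratio a).trans (ratio b).symm⟩ ⟨hs0, ?_⟩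
  rw [div_self (pow_ne_zero _ hs0.ne'), div_self (pow_ne_zero _ hs0.ne')]

end GeometricDistribution

theorem bayes_blind_spot_card_continuum_general {X : Type} [Countable X] [Nontrivial X]
    (P : Set (X → ℝ)) (hPcount : P.Countable)
    (hPpos : ∀ p ∈ P, ∀ x, 0 < p x) :
    Cardinal.mk ↥{q : X → ℝ | (∀ x, 0 ≤ q x) ∧ HasSum q 1 ∧
        ∀ p ∈ P, Function.Injective fun x => q x / p x} = Cardinal.continuum := by
  obtain ⟨e, he⟩ := Countable.exists_injective_nat X
  set ties : Set ℝ :=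
    ⋃ p ∈ P, ⋃ x, ⋃ y, ⋃ (_ : x ≠ y), {t | 0 < t ∧ t ^ e x / p x = t ^ e y / p y}
  have hties : ties.Countable :=
    hPcount.biUnion fun p hp => countable_iUnion fun x => countable_iUnion fun y =>
      countable_iUnion fun hxy => (subsingleton_pos_pow_div_eq (he.ne hxy)
        (hPpos p hp x).ne' (hPpos p hp y).ne').countable
  have untied : ∀ t ∈ Ioo 0 1 \ ties, ∀ p ∈ P, Injective fun x => t ^ e x / p x := by
    rintro t ⟨⟨ht0, -⟩, htie⟩ p hp x y hxy
    by_contra hne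
    exact htie (by simp only [ties, mem_iUnion]; exact ⟨p, hp, x, y, hne, ht0, hxy⟩)
  refine le_antisymm ((mk_set_le _).trans (mk_fun_real_le_continuum X)) ?_
  calc 𝔠 = #(Ioo (0 : ℝ) 1 \ ties : Set ℝ) := by
        rw [mk_diff_eq_of_countable hties (by rw [mk_Ioo_real one_pos]; exact aleph0_lt_continuum),
          mk_Ioo_real one_pos]
    _ = #(geometricDistribution e '' (Ioo 0 1 \ ties)) :=
        (mk_image_eq_of_injOn _ _ ((injOn_geometricDistribution he).mono sdiff_subset)).symm
    _ ≤ _ := by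
        refine mk_le_mk_of_subset (image_subset_iff.mpr fun t ht => ?_)
        exact ⟨geometricDistribution_nonneg ht.1.1.le,
          hasSum_geometricDistribution he ht.1.1 ht.1.2, fun p hp =>
            (injective_geometricDistribution_div_iff he ht.1.1 ht.1.2 p).mpr
            (untied t ht p hp)⟩

/-- For a countable set `X` with at least two elements and a nonempty
countable family `P` of everywhere-positive probability distributions on `X`, the set of
probability distributions `q` on `X` such that for every `p ∈ P` the map `x ↦ q x / p x`
is injective (the Bayes blind spot of `P`) has the cardinality of the continuum. -/
theorem bayes_blind_spot_card_continuum {X : Type} [Countable X] [Nontrivial X]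
    (P : Set (X → ℝ)) (hPne : P.Nonempty) (hPcount : P.Countable)
    (hPpos : ∀ p ∈ P, ∀ x, 0 < p x) (hPsum : ∀ p ∈ P, HasSum p 1) :
    Cardinal.mk ↥{q : X → ℝ | (∀ x, 0 ≤ q x) ∧ HasSum q 1 ∧
        ∀ p ∈ P, Function.Injective fun x => q x / p x} = Cardinal.continuum :=
  bayes_blind_spot_card_continuum_general P hPcount hPpos
end

section
/- Let (p^(k))_{k ≥ 1} be a countable family of probability distributions on ℕ with p^(k)_i > 0 for all i and k. Then there exists a probability distribution q on ℕ with q_i > 0 for all i such that, for every k, the map i ↦ q_i / p^(k)_i is injective; that is, the intersection of the Bayes blind spots BS(p^(k)) is nonempty. -/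
/-!
Take `q` geometric, `qᵢ = (1 - x) xⁱ` with `0 < x < 1`. A collision `xⁱ / pᵢ = xʲ / pⱼ` with
`i < j` forces `x ^ (j - i) = pⱼ / pᵢ`, which has at most one positive solution `x`. Hence only
countably many `x > 0` are bad for some `p^(k)`, and since countable sets of reals have dense
complement, a good `x ∈ (0, 1)` exists.
-/

open Set Function

lemma subsingleton_setOf_pow_div_eq {a b : ℝ} (ha : 0 < a) (hb : 0 < b) {i j : ℕ}
    (hij : i ≠ j) : {x : ℝ | 0 < x ∧ x ^ i / a = x ^ j / b}.Subsingleton := by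
  wlog hlt : i < j generalizing a b i j
  · simpa only [eq_comm] using this hb ha hij.symm (hij.lt_or_gt.resolve_left hlt)
  have pow_sub_eq {x : ℝ} (hx : 0 < x) (h : x ^ i / a = x ^ j / b) : x ^ (j - i) = b / a := by
    rw [← pow_sub_mul_pow x hlt.le] at h
    field_simp at h
    rw [eq_div_iff ha.ne']
    linarith
  rintro x ⟨hx, hxe⟩ y ⟨hy, hye⟩
  exact (pow_left_inj₀ hx.le hy.le (Nat.sub_ne_zero_of_lt hlt)).1
    ((pow_sub_eq hx hxe).trans (pow_sub_eq hy hye).symm)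

lemma countable_setOf_not_injective_pow_div {p : ℕ → ℝ} (hp : ∀ i, 0 < p i) :
    {x : ℝ | 0 < x ∧ ¬ Injective fun i => x ^ i / p i}.Countable := by
  refine (countable_iUnion fun i => countable_iUnion fun j =>
    countable_iUnion fun (hij : i ≠ j) =>
      (subsingleton_setOf_pow_div_eq (hp i) (hp j) hij).countable).mono ?_
  rintro x ⟨hx, hinj⟩
  simp only [Injective, not_forall] at hinj
  obtain ⟨i, j, hxe, hij⟩ := hinj
  exact mem_iUnion₂.2 ⟨i, j, mem_iUnion.2 ⟨hij, hx, hxe⟩⟩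

lemma exists_mem_Ioo_forall_injective_pow_div {p : ℕ → ℕ → ℝ} (hp : ∀ k i, 0 < p k i) :
    ∃ x ∈ Ioo (0 : ℝ) 1, ∀ k, Injective fun i => x ^ i / p k i := by
  have hbad : (⋃ k, {x : ℝ | 0 < x ∧ ¬ Injective fun i => x ^ i / p k i}).Countable :=
    countable_iUnion fun k => countable_setOf_not_injective_pow_div (hp k)
  obtain ⟨x, hx, hx0, hx1⟩ := (hbad.dense_compl ℝ).exists_between zero_lt_one
  simp only [mem_compl_iff, mem_iUnion, mem_ofPred_eq, not_exists, not_and, not_not] at hx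
  exact ⟨x, ⟨hx0, hx1⟩, fun k => hx k hx0⟩

theorem bayes_blind_spot_inter_nonempty_general (p : ℕ → ℕ → ℝ)
    (hpos : ∀ k i, 0 < p k i) :
    ∃ q : ℕ → ℝ, (∀ i, 0 < q i) ∧ HasSum q 1 ∧
      ∀ k, Function.Injective fun i => q i / p k i := by
  obtain ⟨x, ⟨hx0, hx1⟩, hinj⟩ := exists_mem_Ioo_forall_injective_pow_div hpos
  have hc : 0 < 1 - x := sub_pos.2 hx1
  refine ⟨fun i => (1 - x) * x ^ i, fun i => by positivity, ?_, fun k => ?_⟩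
  · simpa [mul_inv_cancel₀ hc.ne'] using
      (hasSum_geometric_of_lt_one hx0.le hx1).mul_left (1 - x)
  · simpa only [mul_div_assoc, comp_def] using (mul_right_injective₀ hc.ne').comp (hinj k)

/-- Given a countable family `(p^(k))` of probability distributions on `ℕ`
with all components positive, there is a probability distribution `q` on `ℕ` with all
components positive such that for every `k` the map `i ↦ qᵢ / p^(k)ᵢ` is injective;
i.e., the intersection of the Bayes blind spots `BS(p^(k))` is nonempty. -/
theorem bayes_blind_spot_inter_nonempty (p : ℕ → ℕ → ℝ)
    (hpos : ∀ k i, 0 < p k i) (hsum : ∀ k, HasSum (p k) 1) :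
    ∃ q : ℕ → ℝ, (∀ i, 0 < q i) ∧ HasSum q 1 ∧
      ∀ k, Function.Injective fun i => q i / p k i :=
  bayes_blind_spot_inter_nonempty_general p hpos
end

section
/- Let p be a probability distribution on ℕ with p_i > 0 for all i. Then the Bayes blind spot BS(p) is of second Baire category (i.e., not meagre) in S, where S carries the subspace topology induced by the ℓ¹-norm. -/
/-- The set of probability distributions on `ℕ`, as a subset of the Banach space `ℓ¹`. -/
def S : Set (lp (fun _ : ℕ => ℝ) 1) :=
  {q | (∀ i, 0 ≤ q i) ∧ HasSum (fun i => q i) 1}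

/-- The Bayes blind spot of `p`, as a subset of `S` (with its ℓ¹-subspace topology). -/
def BS (p : ℕ → ℝ) : Set S := {q | Function.Injective fun i => q.1 i / p i}

/-! Every pair `i ≠ j` gives a closed hyperplane `q i * p j = q j * p i` meeting the convex set
`S` in a nowhere dense set, since the segment from any of its points towards the point mass at `i`
leaves the hyperplane at once. The complement of `BS p` is the countable union of these sets,
so it is meagre, and `BS p` is not, because `S` is closed in `ℓ¹`, hence a Baire space. -/

open Filter Topology

theorem Convex.dense_setOf_ne_zero {E F : Type*} [AddCommGroup E] [Module ℝ E]
    [TopologicalSpace E] [ContinuousAdd E] [ContinuousSMul ℝ E] [AddCommGroup F] [Module ℝ F]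
    [NoZeroSMulDivisors ℝ F] {s : Set E} (hs : Convex ℝ s) (f : E →ₗ[ℝ] F) {e : E}
    (he : e ∈ s) (hfe : f e ≠ 0) : Dense {x : s | f x ≠ 0} := by
  rw [Subtype.dense_iff]
  intro x hx
  obtain hfx | hfx := ne_or_eq (f x) 0
  · exact subset_closure ⟨⟨x, hx⟩, hfx, rfl⟩
  have hpath : Tendsto (fun t : ℝ => x + t • (e - x)) (𝓝[>] 0) (𝓝 x) := by
    have hcont : Continuous fun t : ℝ => x + t • (e - x) := by fun_prop
    simpa using (hcont.tendsto 0).mono_left nhdsWithin_le_nhds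
  refine mem_closure_of_tendsto hpath ?_
  filter_upwards [Ioo_mem_nhdsGT one_pos] with t ⟨ht0, ht1⟩
  refine ⟨⟨_, hs.add_smul_sub_mem hx he ⟨ht0.le, ht1.le⟩⟩, ?_, rfl⟩
  change f (x + t • (e - x)) ≠ 0
  rw [map_add, map_smul, map_sub, hfx, zero_add, sub_zero]
  exact smul_ne_zero ht0.ne' hfe

theorem S_eq_iInter : S = (⋂ i, {q | 0 ≤ lp.evalCLM ℝ (fun _ : ℕ => ℝ) 1 i q}) ∩
    {q | lp.tsumCLM ℝ ℕ ℝ q = 1} := by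
  ext q
  simp only [S, Set.mem_ofPred_eq, Set.mem_inter_iff, Set.mem_iInter,
    ((lp.memℓp q).summable_of_one).hasSum_iff]
  rfl

theorem isClosed_S : IsClosed S := by
  rw [S_eq_iInter]
  exact (isClosed_iInter fun i =>
    isClosed_le continuous_const (lp.evalCLM ℝ _ 1 i).continuous).inter
      (isClosed_eq (lp.tsumCLM ℝ ℕ ℝ).continuous continuous_const)

theorem convex_S : Convex ℝ S := by
  rw [S_eq_iInter]
  exact (convex_iInter fun i => convex_halfSpace_ge (lp.evalCLM ℝ _ 1 i).isLinear 0).inter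
    (convex_hyperplane (lp.tsumCLM ℝ ℕ ℝ).isLinear 1)

theorem single_one_mem_S (i : ℕ) : lp.single 1 i (1 : ℝ) ∈ S := by
  refine ⟨fun j => ?_, ?_⟩
  · rw [lp.single_apply, Pi.single_apply]
    split_ifs <;> norm_num
  · simpa [lp.coeFn_single] using hasSum_pi_single i (1 : ℝ)

theorem eventually_residual_apply_mul_ne {i j : ℕ} (hij : i ≠ j) (a : ℝ) {b : ℝ}
    (hb : b ≠ 0) :
    ∀ᶠ q : S in residual S, q.1 i * b ≠ q.1 j * a := by
  let f := b • lp.evalCLM ℝ (fun _ : ℕ => ℝ) 1 i -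
    a • lp.evalCLM ℝ (fun _ : ℕ => ℝ) 1 j
  have hf : ∀ q : S, f q ≠ 0 ↔ q.1 i * b ≠ q.1 j * a := fun q => by
    simp [f, lp.evalCLM, sub_eq_zero, mul_comm]
  simp only [← hf, Filter.Eventually]
  refine residual_of_dense_open (isOpen_ne_fun (by fun_prop) continuous_const) ?_
  refine convex_S.dense_setOf_ne_zero (f : _ →ₗ[ℝ] ℝ) (single_one_mem_S i) ?_
  simp [f, lp.evalCLM, lp.single_apply, hij.symm, hb]

theorem bayes_blind_spot_not_meagre_general (p : ℕ → ℝ)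
    (hpos : ∀ i, 0 < p i) :
    ¬ IsMeagre (BS p) := by
  have : CompleteSpace S := isClosed_S.completeSpace_coe
  have : Nonempty S := ⟨⟨_, single_one_mem_S 0⟩⟩
  apply not_isMeagre_of_mem_residual
  have hne (i j : ℕ) : ∀ᶠ q : S in residual S, i ≠ j → q.1 i * p j ≠ q.1 j * p i := by
    by_cases hij : i = j
    · exact .of_forall fun _ h => absurd hij h
    · exact (eventually_residual_apply_mul_ne hij (p i) (hpos j).ne').mono fun _ hq _ => hq
  filter_upwards [eventually_countable_forall.2 fun i => eventually_countable_forall.2 (hne i)]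
    with q hq i j hqij
  by_contra hij
  exact hq i j hij ((div_eq_div_iff (hpos i).ne' (hpos j).ne').1 hqij)

/-- For a probability distribution `p` on `ℕ` with all components positive,
the Bayes blind spot `BS(p)` is of second Baire category (not meagre) in `S`. -/
theorem bayes_blind_spot_not_meagre (p : ℕ → ℝ)
    (hpos : ∀ i, 0 < p i) (hsum : HasSum p 1) :
    ¬ IsMeagre (BS p) :=
  bayes_blind_spot_not_meagre_general p hpos
end

section
/- Let p be a probability distribution on ℕ with p_i > 0 for all i. Then the Bayes blind spot BS(p) has empty interior in S with respect to the topology on S induced by the ℓ¹-norm; that is, for every q ∈ BS(p) and every ε > 0 there exists q' ∈ S \ BS(p) with ∑_i |q_i − q'_i| < ε. -/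
/-!
Near any distribution `q` pick two consecutive indices `j ≠ k` so far out that `q j + q k` is
tiny, and redistribute the mass `q j + q k` between them in the proportion `p j : p k`. The
result is again a distribution, it is `ℓ¹`-close to `q`, and its likelihood ratios at `j` and `k`
coincide, so it lies outside `BS p`. Hence the complement of `BS p` is dense.
-/

namespace lp

variable {α : Type*} {E : α → Type*} [∀ i, NormedAddCommGroup (E i)] {p : ENNReal}
  [DecidableEq α]

protected noncomputable def update (f : lp E p) (j : α) (x : E j) : lp E p :=
  f + lp.single p j (x - f j)

theorem coeFn_update (f : lp E p) (j : α) (x : E j) :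
    ⇑(lp.update f j x) = Function.update ⇑f j x := by
  funext i
  rcases eq_or_ne i j with rfl | hij
  · simp [lp.update]
  · simp [lp.update, hij]

theorem dist_update_self [Fact (1 ≤ p)] (f : lp E p) (j : α) (x : E j) :
    dist (lp.update f j x) f = ‖x - f j‖ := by
  rw [dist_eq_norm, lp.update, add_sub_cancel_left,
    lp.norm_single (zero_lt_one.trans_le Fact.out)]

end lp

local notation "ℓ¹" => lp (fun _ : ℕ => ℝ) 1

theorem exists_add_eq_div_eq_div {u v s : ℝ} (hu : 0 < u) (hv : 0 < v) (hs : 0 ≤ s) :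
    ∃ x y, 0 ≤ x ∧ 0 ≤ y ∧ x + y = s ∧ x / u = y / v := by
  refine ⟨s / (u + v) * u, s / (u + v) * v, by positivity, by positivity, ?_, ?_⟩ <;>
    field_simp

theorem update_update_mem_S {q : ℓ¹} (hq : q ∈ S) {j k : ℕ} (hjk : j ≠ k) {x y : ℝ}
    (hx : 0 ≤ x) (hy : 0 ≤ y) (hxy : x + y = q j + q k) :
    lp.update (lp.update q j x) k y ∈ S := by
  simp only [S, Set.mem_ofPred_eq, lp.coeFn_update]
  constructor
  · intro i
    rcases eq_or_ne i k with rfl | hik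
    · simpa using hy
    rcases eq_or_ne i j with rfl | hij
    · simpa [hik] using hx
    simpa [hik, hij] using hq.1 i
  · have h := (hq.2.update j x).update k y
    rwa [Function.update_of_ne hjk.symm, show y - q k + (x - q j + 1) = 1 by linarith] at h

theorem exists_mem_S_dist_lt_div_eq_div {p : ℕ → ℝ} (hpos : ∀ i, 0 < p i) {q : ℓ¹}
    (hq : q ∈ S) {ε : ℝ} (hε : 0 < ε) :
    ∃ q' ∈ S, dist q' q < ε ∧ ∃ j k, j ≠ k ∧ q' j / p j = q' k / p k := by
  have htail : ∀ᶠ n in Filter.atTop, q n < ε / 4 :=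
    (tendsto_order.1 hq.2.summable.tendsto_atTop_zero).2 _ (by positivity)
  obtain ⟨N, hN⟩ := Filter.eventually_atTop.1 htail
  have hNN : N ≠ N + 1 := N.succ_ne_self.symm
  set s := q N + q (N + 1)
  have hs : s < ε / 2 := by linarith [hN N le_rfl, hN (N + 1) N.le_succ]
  have hqN : q N ≤ s := le_add_of_nonneg_right (hq.1 _)
  have hqN' : q (N + 1) ≤ s := le_add_of_nonneg_left (hq.1 _)
  obtain ⟨x, y, hx, hy, hxy, hratio⟩ :=
    exists_add_eq_div_eq_div (hpos N) (hpos (N + 1)) (add_nonneg (hq.1 N) (hq.1 (N + 1)))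
  have hxs : x ≤ s := by linarith
  have hys : y ≤ s := by linarith
  refine ⟨lp.update (lp.update q N x) (N + 1) y, update_update_mem_S hq hNN hx hy hxy, ?_,
    N, N + 1, hNN, by simpa [lp.coeFn_update, hNN] using hratio⟩
  calc dist (lp.update (lp.update q N x) (N + 1) y) q
      ≤ dist (lp.update (lp.update q N x) (N + 1) y) (lp.update q N x) +
          dist (lp.update q N x) q := dist_triangle _ _ _
    _ = |y - q (N + 1)| + |x - q N| := by
        rw [lp.dist_update_self, lp.dist_update_self, lp.coeFn_update,
          Function.update_of_ne hNN.symm, Real.norm_eq_abs, Real.norm_eq_abs]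
    _ ≤ s + s := add_le_add (abs_sub_le_of_nonneg_of_le hy hys (hq.1 _) hqN')
        (abs_sub_le_of_nonneg_of_le hx hxs (hq.1 _) hqN)
    _ < ε := by linarith

theorem bayes_blind_spot_interior_empty_general (p : ℕ → ℝ)
    (hpos : ∀ i, 0 < p i) :
    interior (BS p) = ∅ := by
  refine interior_eq_empty_iff_dense_compl.2 (Metric.dense_iff.2 fun q ε hε => ?_)
  obtain ⟨q', hq', hdist, j, k, hjk, hratio⟩ := exists_mem_S_dist_lt_div_eq_div hpos q.2 hε
  exact ⟨⟨q', hq'⟩, hdist, fun hinj => hjk (hinj hratio)⟩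

/-- For a probability distribution `p` on `ℕ` with all components positive,
the Bayes blind spot `BS(p)` has empty interior in `S` for the ℓ¹-topology. -/
theorem bayes_blind_spot_interior_empty (p : ℕ → ℝ)
    (hpos : ∀ i, 0 < p i) (hsum : HasSum p 1) :
    interior (BS p) = ∅ :=
  bayes_blind_spot_interior_empty_general p hpos
end

section
/- Let p be a probability distribution on ℕ with p_i > 0 for all i, and for an integer ℓ ≥ 1 let S_ℓ denote the set of probability distributions q on ℕ for which there exist at least ℓ pairs (n, m) with n < m and q_n / p_n = q_m / p_m. Then S_ℓ is dense in S for every ℓ ≥ 1, where S carries the subspace topology induced by the ℓ¹-norm. -/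
open Filter Topology Finset

noncomputable def truncation (q : lp (fun _ : ℕ => ℝ) 1) (N : ℕ) : lp (fun _ : ℕ => ℝ) 1 :=
  ∑ i ∈ range N, lp.single 1 i (q i) + lp.single 1 0 (1 - ∑ i ∈ range N, q i)

lemma truncation_apply (q : lp (fun _ : ℕ => ℝ) 1) (N i : ℕ) :
    truncation q N i =
      (if i < N then q i else 0) + if i = 0 then 1 - ∑ j ∈ range N, q j else 0 := by
  simp only [truncation, lp.coeFn_add, lp.coeFn_sum, Pi.add_apply, Finset.sum_apply,
    lp.single_apply, Pi.single_apply, Finset.sum_ite_eq, mem_range]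

lemma truncation_eventually_eq_zero (q : lp (fun _ : ℕ => ℝ) 1) (N : ℕ) :
    ∀ᶠ i in atTop, truncation q N i = 0 := by
  filter_upwards [eventually_gt_atTop N] with i hi
  simp [truncation_apply, hi.not_gt, (N.zero_le.trans_lt hi).ne']

lemma hasSum_truncation (q : lp (fun _ : ℕ => ℝ) 1) (N : ℕ) :
    HasSum (fun i => truncation q N i) 1 := by
  have h := (hasSum_sum (s := range N) fun i _ => hasSum_pi_single i (q i)).add
    (hasSum_pi_single 0 (1 - ∑ i ∈ range N, q i))
  rw [add_sub_cancel] at h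
  convert h using 1
  ext j
  simp only [truncation, lp.coeFn_add, lp.coeFn_sum, Pi.add_apply, Finset.sum_apply,
    lp.single_apply]

lemma truncation_mem_S {q : lp (fun _ : ℕ => ℝ) 1} (hq : q ∈ S) (N : ℕ) :
    truncation q N ∈ S := by
  have hmass : 0 ≤ 1 - ∑ i ∈ range N, q i :=
    sub_nonneg.2 (sum_le_hasSum (range N) (fun i _ => hq.1 i) hq.2)
  refine ⟨fun i => ?_, hasSum_truncation q N⟩
  rw [truncation_apply]
  have := hq.1 i
  positivity

lemma tendsto_truncation {q : lp (fun _ : ℕ => ℝ) 1} (hq : HasSum (fun i => q i) 1) :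
    Tendsto (truncation q) atTop (𝓝 q) := by
  have hsingle := (lp.hasSum_single ENNReal.one_ne_top q).tendsto_sum_nat
  have hcorrection : Tendsto (fun N => lp.single (E := fun _ : ℕ => ℝ) 1 0 (1 - ∑ i ∈ range N, q i))
      atTop (𝓝 0) := by
    have hrest : Tendsto (fun N => 1 - ∑ i ∈ range N, q i) atTop (𝓝 0) := by
      simpa only [sub_self] using (tendsto_const_nhds (x := (1 : ℝ))).sub hq.tendsto_sum_nat
    exact ((lp.isometry_single 0).continuous.tendsto' 0 0 (lp.single_zero 1 0)).comp hrest
  have := hsingle.add hcorrection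
  rwa [add_zero] at this

lemma exists_ratio_coincidences_of_eventually_eq_zero (p q : ℕ → ℝ)
    (hq : ∀ᶠ i in atTop, q i = 0) (ℓ : ℕ) :
    ∃ F : Finset (ℕ × ℕ), ℓ ≤ F.card ∧
      ∀ nm ∈ F, nm.1 < nm.2 ∧ q nm.1 / p nm.1 = q nm.2 / p nm.2 := by
  obtain ⟨N, hN⟩ := eventually_atTop.1 hq
  refine ⟨(range ℓ).map ⟨fun j => (N + j, N + j + 1), fun a b h => by simpa using h⟩, by simp, ?_⟩
  simp only [Finset.mem_map]
  rintro _ ⟨j, -, rfl⟩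
  show N + j < N + j + 1 ∧ q (N + j) / p (N + j) = q (N + j + 1) / p (N + j + 1)
  exact ⟨by omega, by rw [hN _ (by omega), hN _ (by omega), zero_div, zero_div]⟩

theorem ratio_coincidence_level_set_dense_general (p : ℕ → ℝ) (ℓ : ℕ) :
    Dense {q : S | ∃ F : Finset (ℕ × ℕ), ℓ ≤ F.card ∧
      ∀ nm ∈ F, nm.1 < nm.2 ∧ q.1 nm.1 / p nm.1 = q.1 nm.2 / p nm.2} := by
  intro q
  refine mem_closure_of_tendsto (f := fun N => (⟨truncation q N, truncation_mem_S q.2 N⟩ : S))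
    (tendsto_subtype_rng.2 (tendsto_truncation q.2.2)) (Eventually.of_forall fun N => ?_)
  exact exists_ratio_coincidences_of_eventually_eq_zero p _ (truncation_eventually_eq_zero q N) ℓ

/-- For a probability distribution `p` on `ℕ` with all components
positive and an integer `ℓ ≥ 1`, the set `S_ℓ` of distributions `q` for which there are at
least `ℓ` pairs `(n, m)` with `n < m` and `qₙ/pₙ = qₘ/pₘ` is dense in `S` for the
ℓ¹-subspace topology. -/
theorem ratio_coincidence_level_set_dense (p : ℕ → ℝ)
    (hpos : ∀ i, 0 < p i) (hsum : HasSum p 1) (ℓ : ℕ) (hℓ : 1 ≤ ℓ) :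
    Dense {q : S | ∃ F : Finset (ℕ × ℕ), ℓ ≤ F.card ∧
      ∀ nm ∈ F, nm.1 < nm.2 ∧ q.1 nm.1 / p nm.1 = q.1 nm.2 / p nm.2} :=
  ratio_coincidence_level_set_dense_general p ℓ
end

section
/- Let r be a real number with 1 ≤ r. Then for every probability distribution p on ℕ with p_i > 0 for all i, with S given the subspace topology induced by the ℓ^r-norm (‖s‖_r = (∑_i |s_i|^r)^{1/r}), the Bayes blind spot BS(p) is of second Baire category in S, is dense in S, and has empty interior in S. -/
/-- The set of probability distributions on `ℕ`, as a subset of the space `ℓʳ`. -/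
def Sr (r : ENNReal) : Set (lp (fun _ : ℕ => ℝ) r) :=
  {q | (∀ i, 0 ≤ q i) ∧ HasSum (fun i => q i) 1}

/-- The Bayes blind spot of `p`, as a subset of `Sr r` (with its ℓʳ-subspace topology). -/
def BSr (r : ENNReal) (p : ℕ → ℝ) : Set (Sr r) :=
  {q | Function.Injective fun i => q.1 i / p i}

/-!
For nonnegative sequences, `∑ qᵢ = 1` says that every partial sum is `≤ 1` (a closed condition in
`ℓʳ`) and that partial sums come arbitrarily close to `1` (a countable intersection of open
conditions). So `S` is a `G_δ` in the complete space `ℓʳ` and hence a Baire space, although it is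
not closed in `ℓʳ` when `r > 1`. The complement of `BS(p)` is the countable union of the closed
"tie sets" `{q | q_a / p_a = q_b / p_b}`, `a ≠ b`; each has empty interior because `S` is convex
and moving towards the point mass at `a` breaks the tie. Hence `BS(p)` is residual, so dense and
not meagre. Its interior is empty because redistributing the small mass `q_N + q_{N+1}` in
proportion `p_N : p_{N+1}` creates a tie at distance `O(q_N + q_{N+1}) → 0`.
-/

open Filter Topology Metric Set TopologicalSpace
open scoped ENNReal

theorem IsGδ.baireSpace_of_completelyPseudoMetrizable {X : Type*} [TopologicalSpace X]
    [IsCompletelyPseudoMetrizableSpace X] {s : Set X} (hs : IsGδ s) : BaireSpace s := by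
  have : IsCompletelyPseudoMetrizableSpace (closure s) :=
    isClosed_closure.isCompletelyPseudoMetrizableSpace
  have hemb := IsEmbedding.inclusion (subset_closure (s := s))
  have : BaireSpace (range (inclusion (subset_closure (s := s)))) := by
    rw [range_inclusion]
    refine (hs.preimage continuous_subtype_val).baireSpace_of_dense ?_
    rw [Subtype.dense_iff, image_preimage_eq_inter_range, Subtype.range_coe,
      inter_eq_left.mpr subset_closure]
  exact hemb.toHomeomorph.symm.baireSpace

theorem hasSum_iff_sum_range_le_and_exists_gt {f : ℕ → ℝ} {a : ℝ} (hf : ∀ i, 0 ≤ f i) :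
    HasSum f a ↔
      (∀ n, ∑ i ∈ Finset.range n, f i ≤ a) ∧ ∀ ε > 0, ∃ n, a - ε < ∑ i ∈ Finset.range n, f i := by
  have hmono : Monotone fun n => ∑ i ∈ Finset.range n, f i := fun m n hmn =>
    Finset.sum_le_sum_of_subset_of_nonneg (Finset.range_mono hmn) fun i _ _ => hf i
  rw [hasSum_iff_tendsto_nat_of_nonneg hf]
  refine ⟨fun h => ⟨hmono.ge_of_tendsto h, fun ε hε => ?_⟩, fun ⟨hle, hgt⟩ => ?_⟩
  · exact (h.eventually (lt_mem_nhds (sub_lt_self a hε))).exists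
  · refine Metric.tendsto_atTop.mpr fun ε hε => ?_
    obtain ⟨N, hN⟩ := hgt ε hε
    exact ⟨N, fun n hn => abs_sub_lt_iff.mpr ⟨by linarith [hle n], by linarith [hmono hn]⟩⟩

theorem continuous_lp_apply {P : ℝ≥0∞} [Fact (1 ≤ P)] (i : ℕ) :
    Continuous fun f : lp (fun _ : ℕ => ℝ) P => f i :=
  (continuous_apply i).comp lp.uniformContinuous_coe.continuous

section
variable {P : ℝ≥0∞}

theorem convex_Sr : Convex ℝ (Sr P) := by
  intro x hx y hy a b ha hb hab
  refine ⟨fun i => ?_, ?_⟩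
  · simp only [lp.coeFn_add, lp.coeFn_smul, Pi.add_apply, Pi.smul_apply, smul_eq_mul]
    exact add_nonneg (mul_nonneg ha (hx.1 i)) (mul_nonneg hb (hy.1 i))
  · have h := (hx.2.mul_left a).add (hy.2.mul_left b)
    rw [mul_one, mul_one, hab] at h
    exact h

theorem single_one_mem_Sr (i : ℕ) : lp.single P i (1 : ℝ) ∈ Sr P := by
  refine ⟨fun j => ?_, ?_⟩
  · rw [lp.coeFn_single]; exact (Pi.single_nonneg (α := fun _ : ℕ => ℝ)).mpr zero_le_one j
  · simpa [lp.coeFn_single] using hasSum_pi_single i (1 : ℝ)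

theorem sub_single_add_single_mem_Sr {q : lp (fun _ : ℕ => ℝ) P} (hq : q ∈ Sr P) {u v : ℕ}
    (huv : u ≠ v) {t : ℝ} (hvt : -q v ≤ t) (htu : t ≤ q u) :
    q - lp.single P u t + lp.single P v t ∈ Sr P := by
  refine ⟨fun j => ?_, ?_⟩
  · simp only [lp.coeFn_add, lp.coeFn_sub, lp.coeFn_single, Pi.add_apply, Pi.sub_apply,
      Pi.single_apply]
    have := hq.1 j
    split_ifs with hju hjv <;> subst_vars <;> first | contradiction | linarith
  · have h := (hq.2.sub (hasSum_pi_single u t)).add (hasSum_pi_single v t)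
    rw [sub_add_cancel] at h
    exact h

variable [Fact (1 ≤ P)]

theorem isGδ_Sr : IsGδ (Sr P) := by
  have hsum : ∀ n, Continuous fun q : lp (fun _ : ℕ => ℝ) P => ∑ i ∈ Finset.range n, q i :=
    fun n => continuous_finsetSum _ fun i _ => continuous_lp_apply i
  have hS : Sr P = (⋂ i, {q | 0 ≤ q i}) ∩ (⋂ n, {q | ∑ i ∈ Finset.range n, q i ≤ 1}) ∩
      ⋂ m : ℕ, ⋃ n, {q | 1 - 1 / (m + 1 : ℝ) < ∑ i ∈ Finset.range n, q i} := by
    ext q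
    simp only [Sr, mem_ofPred_eq, mem_inter_iff, mem_iInter, mem_iUnion, and_assoc]
    refine and_congr_right fun hq => (hasSum_iff_sum_range_le_and_exists_gt hq).trans
      (and_congr_right fun _ => ⟨fun h m => h _ Nat.one_div_pos_of_nat, fun h ε hε => ?_⟩)
    obtain ⟨m, hm⟩ := exists_nat_one_div_lt hε
    obtain ⟨n, hn⟩ := h m
    exact ⟨n, by linarith⟩
  rw [hS]
  refine ((IsClosed.isGδ ?_).inter (IsClosed.isGδ ?_)).inter
    (.iInter fun m => (isOpen_iUnion fun n => ?_).isGδ)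
  · exact isClosed_iInter fun i => isClosed_le continuous_const (continuous_lp_apply i)
  · exact isClosed_iInter fun n => isClosed_le (hsum n) continuous_const
  · exact isOpen_lt continuous_const (hsum n)

instance : BaireSpace (Sr P) := IsGδ.baireSpace_of_completelyPseudoMetrizable isGδ_Sr

theorem norm_neg_single_add_single_le (u v : ℕ) (t : ℝ) :
    ‖(-lp.single P u t + lp.single P v t : lp (fun _ : ℕ => ℝ) P)‖ ≤ 2 * |t| := by
  have hP : 0 < P := zero_lt_one.trans_le Fact.out
  calc _ ≤ ‖(-lp.single P u t : lp (fun _ : ℕ => ℝ) P)‖ + ‖lp.single P v t‖ := norm_add_le _ _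
    _ = 2 * |t| := by rw [norm_neg, lp.norm_single hP, lp.norm_single hP, Real.norm_eq_abs]; ring

end

def tieSet (P : ℝ≥0∞) (p : ℕ → ℝ) (a b : ℕ) : Set (Sr P) :=
  {q | q.1 a / p a = q.1 b / p b}

theorem compl_BSr_eq_iUnion_tieSet (P : ℝ≥0∞) (p : ℕ → ℝ) :
    (BSr P p)ᶜ = ⋃ (a) (b) (_ : a ≠ b), tieSet P p a b := by
  ext q
  simp only [BSr, tieSet, mem_compl_iff, mem_ofPred_eq, Function.not_injective_iff, mem_iUnion,
    exists_prop]
  exact exists₂_congr fun _ _ => and_comm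

section
variable {P : ℝ≥0∞} [Fact (1 ≤ P)] {p : ℕ → ℝ}

theorem isClosed_tieSet (a b : ℕ) : IsClosed (tieSet P p a b) :=
  isClosed_eq (((continuous_lp_apply a).comp continuous_subtype_val).div_const _)
    (((continuous_lp_apply b).comp continuous_subtype_val).div_const _)

theorem interior_tieSet_eq_empty {a b : ℕ} (hpa : p a ≠ 0) (hab : a ≠ b) :
    interior (tieSet P p a b) = ∅ := by
  rw [interior_eq_empty_iff_dense_compl]
  intro x
  by_cases hx : x ∈ tieSet P p a b
  swap
  · exact subset_closure hx
  set t : ℕ → ℝ := fun n => 1 / (n + 1)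
  have ht0 : ∀ n, 0 < t n := fun n => Nat.one_div_pos_of_nat
  have ht1 : ∀ n, t n ≤ 1 := fun n => div_le_one_of_le₀ (by linarith [n.cast_nonneg (α := ℝ)])
    (by positivity)
  let y : ℕ → Sr P := fun n => ⟨(1 - t n) • x.1 + t n • lp.single P a 1,
    convex_Sr x.2 (single_one_mem_Sr a) (by linarith [ht1 n]) (ht0 n).le (by ring)⟩
  refine mem_closure_of_tendsto (b := atTop) (f := y) ?_ (Eventually.of_forall fun n hn => ?_)
  · rw [tendsto_subtype_rng]
    have : Tendsto (fun s : ℝ => (1 - s) • x.1 + s • lp.single P a 1) (𝓝 0) (𝓝 x.1) := by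
      convert (Continuous.tendsto
        (f := fun s : ℝ => (1 - s) • x.1 + s • lp.single P a 1) (by fun_prop) 0) using 2
      simp
    exact this.comp tendsto_one_div_add_atTop_nhds_zero_nat
  · have hxab : x.1 a / p a = x.1 b / p b := hx
    have hyab : ((1 - t n) * x.1 a + t n) / p a = (1 - t n) * x.1 b / p b := by
      simp only [y, tieSet, mem_ofPred_eq, lp.coeFn_add, lp.coeFn_smul, lp.coeFn_single,
        Pi.add_apply, Pi.smul_apply, smul_eq_mul, Pi.single_eq_same,
        Pi.single_eq_of_ne hab.symm] at hn
      simpa using hn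
    rw [add_div, mul_div_assoc, mul_div_assoc, hxab] at hyab
    exact div_ne_zero (ht0 n).ne' hpa (by linarith)

theorem isMeagre_compl_BSr (hp : ∀ i, p i ≠ 0) : IsMeagre (BSr P p)ᶜ := by
  rw [compl_BSr_eq_iUnion_tieSet]
  exact isMeagre_iUnion fun a => isMeagre_iUnion fun b => isMeagre_iUnion fun hab =>
    ((isClosed_tieSet a b).isNowhereDense_iff.mpr (interior_tieSet_eq_empty (hp a) hab)).isMeagre

theorem exists_mem_tieSet_dist_le {a b : ℕ} (hpa : 0 < p a) (hpb : 0 < p b) (hab : a ≠ b)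
    (x : Sr P) : ∃ q ∈ tieSet P p a b, dist q x ≤ 2 * (x.1 a + x.1 b) := by
  set s := x.1 a + x.1 b
  set w := p a / (p a + p b)
  have hxa := x.2.1 a
  have hxb := x.2.1 b
  have hw0 : 0 ≤ w := by positivity
  have hw1 : w ≤ 1 := div_le_one_of_le₀ (by linarith) (by positivity)
  -- moving `t` from `a` to `b` leaves `s * w` at `a` and `s * (1 - w)` at `b`
  set t := x.1 a - s * w
  have hmem := sub_single_add_single_mem_Sr x.2 hab (t := t) (by nlinarith) (by nlinarith)
  refine ⟨⟨_, hmem⟩, ?_, ?_⟩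
  · simp only [tieSet, mem_ofPred_eq, lp.coeFn_add, lp.coeFn_sub, lp.coeFn_single, Pi.add_apply,
      Pi.sub_apply, Pi.single_eq_same, Pi.single_eq_of_ne hab, Pi.single_eq_of_ne hab.symm]
    simp only [t, w, s]
    field_simp
    ring
  · rw [Subtype.dist_eq, dist_eq_norm,
      show x.1 - lp.single P a t + lp.single P b t - x.1 = -lp.single P a t + lp.single P b t by
        abel]
    refine (norm_neg_single_add_single_le a b t).trans ?_
    have : |t| ≤ s := abs_le.mpr ⟨by nlinarith, by nlinarith⟩
    linarith

theorem interior_BSr_eq_empty (hp : ∀ i, 0 < p i) : interior (BSr P p) = ∅ := by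
  rw [interior_eq_empty_iff_dense_compl, compl_BSr_eq_iUnion_tieSet]
  intro x
  choose q hq hdist using fun n =>
    exists_mem_tieSet_dist_le (hp n) (hp (n + 1)) (Nat.succ_ne_self n).symm x
  refine mem_closure_of_tendsto (b := atTop) (f := q) (tendsto_iff_dist_tendsto_zero.mpr ?_)
    (Eventually.of_forall fun n =>
      mem_iUnion₂.mpr ⟨n, n + 1, mem_iUnion.mpr ⟨(Nat.succ_ne_self n).symm, hq n⟩⟩)
  have hx : Tendsto (fun n => x.1 n) atTop (𝓝 0) := x.2.2.summable.tendsto_atTop_zero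
  have h := (hx.add (hx.comp (tendsto_add_atTop_nat 1))).const_mul 2
  rw [add_zero, mul_zero] at h
  exact squeeze_zero (fun _ => dist_nonneg) hdist h

end

theorem bayes_blind_spot_lp_topologies_general (r : ℝ)
    [Fact (1 ≤ ENNReal.ofReal r)]
    (p : ℕ → ℝ) (hpos : ∀ i, 0 < p i) :
    ¬ IsMeagre (BSr (ENNReal.ofReal r) p) ∧
      Dense (BSr (ENNReal.ofReal r) p) ∧
      interior (BSr (ENNReal.ofReal r) p) = ∅ := by
  have hres : BSr (ENNReal.ofReal r) p ∈ residual _ :=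
    compl_compl (BSr _ p) ▸ isMeagre_compl_BSr fun i => (hpos i).ne'
  have : Nonempty (Sr (ENNReal.ofReal r)) := ⟨⟨_, single_one_mem_Sr 0⟩⟩
  exact ⟨not_isMeagre_of_mem_residual hres, dense_of_mem_residual hres,
    interior_BSr_eq_empty hpos⟩

/-- Let `r` be a real number with `1 ≤ r`.  For every probability
distribution `p` on `ℕ` with all components positive, in the ℓʳ-subspace topology on the
set `S` of probability distributions, the Bayes blind spot `BS(p)` is of second Baire
category in `S`, is dense in `S`, and has empty interior in `S`. -/
theorem bayes_blind_spot_lp_topologies (r : ℝ) (hr : 1 ≤ r)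
    [Fact (1 ≤ ENNReal.ofReal r)]
    (p : ℕ → ℝ) (hpos : ∀ i, 0 < p i) (hsum : HasSum p 1) :
    ¬ IsMeagre (BSr (ENNReal.ofReal r) p) ∧
      Dense (BSr (ENNReal.ofReal r) p) ∧
      interior (BSr (ENNReal.ofReal r) p) = ∅ :=
  bayes_blind_spot_lp_topologies_general r p hpos
end

section
/- There exists a probability measure M on S (equipped with the Borel σ-algebra of the ℓ¹-subspace topology) such that for every probability distribution p on ℕ with p_i > 0 for all i, the Bayes blind spot BS(p) has M-measure 1. -/
/-!
Take for `M` the law of a geometric distribution `q_i = (1 - r) r ^ i` with ratio `r` uniform on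
`[0, 1/2]`. For a fixed positive `p` and `i ≠ j`, the coincidence `q_i / p_i = q_j / p_j` is, once
the factor `1 - r` is cancelled, the polynomial equation `r ^ i p_j = r ^ j p_i`, which has finitely
many roots. So only countably many ratios leave the blind spot, and they form a null set.
-/

open MeasureTheory

open Filter Topology unitInterval Polynomial

theorem lp.norm_eq_tsum_norm {ι E : Type*} [NormedAddCommGroup E]
    (f : lp (fun _ : ι => E) 1) : ‖f‖ = ∑' i, ‖f i‖ := by
  simpa using lp.norm_eq_tsum_rpow (p := 1) (by norm_num) f

theorem lp.continuous_of_dominated {X ι E : Type*} [TopologicalSpace X] [NormedAddCommGroup E]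
    {f : X → lp (fun _ : ι => E) 1} {bound : ι → ℝ} (hbound : Summable bound)
    (hf : ∀ i, Continuous fun x => f x i) (hle : ∀ x i, ‖f x i‖ ≤ bound i) : Continuous f := by
  refine continuous_iff_continuousAt.2 fun x => tendsto_iff_norm_sub_tendsto_zero.2 ?_
  simp_rw [lp.norm_eq_tsum_norm, lp.coeFn_sub, Pi.sub_apply]
  have h := tendsto_tsum_of_dominated_convergence (𝓕 := 𝓝 x)
    (f := fun y i => ‖f y i - f x i‖) (g := fun _ => 0)
    (hbound.mul_left 2) (fun i => ?_) (.of_forall fun y i => ?_)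
  · simpa using h
  · simpa using ((hf i).tendsto x).sub_const (f x i) |>.norm
  · calc ‖‖f y i - f x i‖‖ = ‖f y i - f x i‖ := norm_norm _
      _ ≤ ‖f y i‖ + ‖f x i‖ := norm_sub_le _ _
      _ ≤ 2 * bound i := by linarith [hle y i, hle x i]

theorem Set.finite_setOf_pow_mul_eq_pow_mul {R : Type*} [CommRing R] [IsDomain R] {i j : ℕ}
    (hij : i ≠ j) {a b : R} (hb : b ≠ 0) : {x : R | x ^ i * a = x ^ j * b}.Finite := by
  have hP : C a * X ^ i - C b * X ^ j ≠ 0 := fun h => hb <| by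
    simpa [coeff_X_pow, Ne.symm hij] using congrArg (coeff · j) h
  refine (Polynomial.finite_setOfPred_isRoot hP).subset fun x (hx : x ^ i * a = x ^ j * b) => ?_
  change eval x (C a * X ^ i - C b * X ^ j) = 0
  simp only [eval_sub, eval_mul, eval_C, eval_pow, eval_X]
  linear_combination hx

def S.mk (q : ℕ → ℝ) (hq₀ : ∀ i, 0 ≤ q i) (hq : HasSum q 1) : S :=
  ⟨⟨q, memℓp_gen <| by simpa [abs_of_nonneg (hq₀ _)] using hq.summable⟩, hq₀, hq⟩

def geometricDist (r : ℝ) (i : ℕ) : ℝ := (1 - r) * r ^ i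

theorem geometricDist_nonneg {r : ℝ} (h₀ : 0 ≤ r) (h₁ : r ≤ 1) (i : ℕ) : 0 ≤ geometricDist r i :=
  mul_nonneg (sub_nonneg.2 h₁) (pow_nonneg h₀ i)

theorem hasSum_geometricDist {r : ℝ} (h₀ : 0 ≤ r) (h₁ : r < 1) : HasSum (geometricDist r) 1 := by
  have h := (hasSum_geometric_of_lt_one h₀ h₁).mul_left (1 - r)
  rwa [mul_inv_cancel₀ (sub_ne_zero.2 h₁.ne')] at h

theorem countable_setOf_not_injective_geometricDist_div {p : ℕ → ℝ} (hp : ∀ i, p i ≠ 0) :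
    {r : ℝ | ¬ Function.Injective fun i => geometricDist r i / p i}.Countable := by
  refine ((Set.countable_singleton 1).union <| Set.countable_iUnion fun i =>
    Set.countable_iUnion fun j => Set.countable_iUnion fun (hij : i ≠ j) =>
      (Set.finite_setOf_pow_mul_eq_pow_mul hij (a := p j) (hp i)).countable).mono fun r hr => ?_
  obtain ⟨i, j, heq, hij⟩ : ∃ i j, geometricDist r i / p i = geometricDist r j / p j ∧ i ≠ j := by
    simpa [Function.Injective] using hr
  by_cases hr1 : r = 1
  · exact .inl hr1
  refine .inr (Set.mem_iUnion₂.2 ⟨i, j, Set.mem_iUnion.2 ⟨hij, ?_⟩⟩)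
  rw [div_eq_div_iff (hp i) (hp j), geometricDist, geometricDist, mul_assoc, mul_assoc] at heq
  exact mul_left_cancel₀ (sub_ne_zero.2 (Ne.symm hr1)) heq

/- Halving the ratio keeps the curve inside `S` at `t = 1` and dominated by `2⁻ⁱ`, which makes it
continuous into `ℓ¹`. -/
noncomputable def geometricCurve (t : I) : S :=
  S.mk (geometricDist (t / 2)) (geometricDist_nonneg (by linarith [t.2.1]) (by linarith [t.2.2]))
    (hasSum_geometricDist (by linarith [t.2.1]) (by linarith [t.2.2]))

theorem continuous_geometricCurve : Continuous geometricCurve := by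
  refine .subtype_mk
    (lp.continuous_of_dominated summable_geometric_two (fun i => ?_) fun t i => ?_) _
  · exact (continuous_const.sub (continuous_subtype_val.div_const 2)).mul
      ((continuous_subtype_val.div_const 2).pow i)
  · have h0 : 0 ≤ (t : ℝ) / 2 := by linarith [t.2.1]
    have h1 : (t : ℝ) / 2 ≤ 1 / 2 := by linarith [t.2.2]
    change ‖geometricDist (t / 2) i‖ ≤ (1 / 2) ^ i
    rw [Real.norm_of_nonneg (geometricDist_nonneg h0 (by linarith) i), geometricDist]
    calc (1 - (t : ℝ) / 2) * ((t : ℝ) / 2) ^ i ≤ 1 * (1 / 2) ^ i := by gcongr; linarith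
      _ = (1 / 2) ^ i := one_mul _

theorem ae_geometricCurve_mem_BS {p : ℕ → ℝ} (hp : ∀ i, p i ≠ 0) :
    ∀ᵐ t, geometricCurve t ∈ BS p :=
  ae_iff.2 <| ((countable_setOf_not_injective_geometricDist_div hp).preimage
    (f := fun t : I => (t : ℝ) / 2) fun s t h => Subtype.ext (by linarith)).measure_zero _

/-- There is a probability measure `M` on `S` (with the Borel σ-algebra
of the ℓ¹-subspace topology) such that for every probability distribution `p` on `ℕ` with
all components positive, the Bayes blind spot `BS(p)` has `M`-measure `1`. -/
theorem exists_measure_bayes_blind_spot_full :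
    ∃ M : @Measure ↥S (borel ↥S),
      @IsProbabilityMeasure ↥S (borel ↥S) M ∧
        ∀ p : ℕ → ℝ, (∀ i, 0 < p i) → HasSum p 1 → M (BS p) = 1 := by
  let _ : MeasurableSpace S := borel S
  have _ : BorelSpace S := ⟨rfl⟩
  have hγ : AEMeasurable geometricCurve := continuous_geometricCurve.measurable.aemeasurable
  refine ⟨volume.map geometricCurve, Measure.isProbabilityMeasure_map hγ, fun p hp _ => ?_⟩
  have hfull : geometricCurve ⁻¹' BS p =ᵐ[volume] Set.univ :=
    ae_eq_univ.2 (ae_iff.1 (ae_geometricCurve_mem_BS fun i => (hp i).ne'))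
  -- `le_map_apply` holds for every set, so `BS p` need not be shown measurable.
  refine le_antisymm prob_le_one ?_
  calc 1 = volume (geometricCurve ⁻¹' BS p) := by rw [measure_congr hfull, measure_univ]
    _ ≤ _ := Measure.le_map_apply hγ _
end
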